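/- Let $v : 2^U \to \mathbb{R}_{\geq 0}$ be a monotone submodular function with $v(\emptyset)=0$, let $(e_1,\dots,e_n)$ be an ordering of a subset $P\subseteq U$, define $\phi_{e_t} := v(\{e_1,\dots,e_t\}) - v(\{e_1,\dots,e_{t-1}\})$, and extend $\phi_j$ arbitrarily nonnegatively to $U\setminus P$. Define $\hat{v}(S) := \min_{T\subseteq S}\{v(T)+\sum_{j\in S\setminus T}\phi_j\}$. Then for every single element $e_t \in P$ one has $\hat{v}(\{e_t\}) = \phi_{e_t}$, and for every $S \subseteq P$, $\hat{v}(S) = \sum_{j\in S}\phi_j$ (i.e., $\hat{v}$ is additive on subsets of $P$). -/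

import Mathlib

/-!
Submodularity says marginal gains shrink as the base set grows, so the gain of `e t` over the
part of `T` preceding it is at least `φ (e t)`, its gain over the whole prefix. Summing along the
ordering gives `∑ j ∈ T, φ j ≤ v T` for every `T ⊆ P`; hence in the minimum defining `vhat S`,
`S ⊆ P`, no `T` beats `T = ∅`, whose value is `∑ j ∈ S, φ j`.
-/

open Finset

noncomputable def vhat {U : Type*} [DecidableEq U] (v : Finset U → ℝ) (φ : U → ℝ)
    (S : Finset U) : ℝ :=
  S.powerset.inf' ⟨∅, Finset.mem_powerset.mpr (Finset.empty_subset S)⟩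
    (fun T => v T + ∑ j ∈ S \ T, φ j)

def prefixSet {U : Type*} [DecidableEq U] {n : ℕ} (e : Fin n → U) (t : ℕ) : Finset U :=
  (Finset.univ.filter fun i : Fin n => (i : ℕ) < t).image e

section Vhat

variable {U : Type*} [DecidableEq U] (v : Finset U → ℝ) (φ : U → ℝ)

lemma vhat_le {S T : Finset U} (hT : T ⊆ S) : vhat v φ S ≤ v T + ∑ j ∈ S \ T, φ j :=
  inf'_le (fun T => v T + ∑ j ∈ S \ T, φ j) (mem_powerset.mpr hT)

lemma le_vhat {S : Finset U} {c : ℝ} (h : ∀ T ⊆ S, c ≤ v T + ∑ j ∈ S \ T, φ j) :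
    c ≤ vhat v φ S :=
  le_inf' _ _ fun T hT => h T (mem_powerset.mp hT)

lemma vhat_eq_sum_of_sum_le (hempty : v ∅ = 0) {S : Finset U}
    (h : ∀ T ⊆ S, ∑ j ∈ T, φ j ≤ v T) : vhat v φ S = ∑ j ∈ S, φ j := by
  apply le_antisymm
  · simpa [hempty] using vhat_le v φ (empty_subset S)
  · refine le_vhat v φ fun T hT => ?_
    rw [← sum_sdiff hT]
    linarith [h T hT]

end Vhat

lemma sub_le_sub_of_submodular {U : Type*} [DecidableEq U] {v : Finset U → ℝ}
    (hsub : ∀ S T : Finset U, v S + v T ≥ v (S ∩ T) + v (S ∪ T))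
    {A B : Finset U} {x : U} (hAB : A ⊆ B) (hx : x ∉ B) :
    v (insert x B) - v B ≤ v (insert x A) - v A := by
  have hinter : insert x A ∩ B = A := by
    rw [insert_inter_of_notMem hx, inter_eq_left.mpr hAB]
  have hunion : insert x A ∪ B = insert x B := by
    rw [insert_union, union_eq_right.mpr hAB]
  have := hsub (insert x A) B
  rw [hinter, hunion] at this
  linarith

section Prefix

variable {U : Type*} [DecidableEq U] {n : ℕ} (e : Fin n → U)

lemma prefixSet_zero : prefixSet e 0 = ∅ := by
  simp [prefixSet]

lemma prefixSet_self : prefixSet e n = univ.image e := by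
  rw [prefixSet, filter_true_of_mem fun i _ => i.isLt]

lemma prefixSet_succ (t : Fin n) : prefixSet e (t + 1) = insert (e t) (prefixSet e t) := by
  have h : (univ.filter fun i : Fin n => (i : ℕ) < t + 1)
      = insert t (univ.filter fun i : Fin n => (i : ℕ) < t) := by
    ext i
    simp only [mem_filter, mem_univ, true_and, mem_insert, Nat.lt_succ_iff, Fin.ext_iff]
    omega
  rw [prefixSet, prefixSet, h, image_insert]

lemma apply_notMem_prefixSet {e : Fin n → U} (hinj : Function.Injective e) (t : Fin n) :
    e t ∉ prefixSet e t := by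
  simp only [prefixSet, mem_image, mem_filter, mem_univ, true_and, hinj.eq_iff]
  rintro ⟨i, hlt, rfl⟩
  exact lt_irrefl _ hlt

end Prefix

section MarginalGains

variable {U : Type*} [DecidableEq U] {v : Finset U → ℝ} {φ : U → ℝ} {n : ℕ} {e : Fin n → U}

lemma sum_inter_prefixSet_le (hempty : v ∅ = 0)
    (hsub : ∀ S T : Finset U, v S + v T ≥ v (S ∩ T) + v (S ∪ T)) (hinj : Function.Injective e)
    (hφ : ∀ t : Fin n, φ (e t) = v (prefixSet e ((t : ℕ) + 1)) - v (prefixSet e (t : ℕ)))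
    (T : Finset U) {t : ℕ} (ht : t ≤ n) :
    ∑ j ∈ T ∩ prefixSet e t, φ j ≤ v (T ∩ prefixSet e t) := by
  induction t with
  | zero => simp [prefixSet_zero, hempty]
  | succ t ih =>
    let i : Fin n := ⟨t, ht⟩
    have hnotMem : e i ∉ prefixSet e t := apply_notMem_prefixSet hinj i
    rw [show t + 1 = (i : ℕ) + 1 from rfl, prefixSet_succ]
    by_cases hmem : e i ∈ T
    · have hgain : φ (e i) ≤ v (insert (e i) (T ∩ prefixSet e t)) - v (T ∩ prefixSet e t) := by
        rw [hφ i, prefixSet_succ]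
        exact sub_le_sub_of_submodular hsub inter_subset_right hnotMem
      rw [inter_insert_of_mem hmem, sum_insert fun h => hnotMem (mem_inter.mp h).2]
      linarith [ih (Nat.le_of_succ_le ht)]
    · rw [inter_insert_of_notMem hmem]
      exact ih (Nat.le_of_succ_le ht)

lemma sum_le_of_subset_image (hempty : v ∅ = 0)
    (hsub : ∀ S T : Finset U, v S + v T ≥ v (S ∩ T) + v (S ∪ T)) (hinj : Function.Injective e)
    (hφ : ∀ t : Fin n, φ (e t) = v (prefixSet e ((t : ℕ) + 1)) - v (prefixSet e (t : ℕ)))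
    {T : Finset U} (hT : T ⊆ univ.image e) : ∑ j ∈ T, φ j ≤ v T := by
  simpa [prefixSet_self, inter_eq_left.mpr hT] using
    sum_inter_prefixSet_le hempty hsub hinj hφ T le_rfl

end MarginalGains

theorem vhat_additive_on_P_general {U : Type*} [DecidableEq U]
    (v : Finset U → ℝ)
    (hempty : v ∅ = 0)
    (hsub : ∀ S T : Finset U, v S + v T ≥ v (S ∩ T) + v (S ∪ T))
    {n : ℕ} (e : Fin n → U) (hinj : Function.Injective e)
    (φ : U → ℝ)
    (hφ : ∀ t : Fin n, φ (e t) = v (prefixSet e ((t : ℕ) + 1)) - v (prefixSet e (t : ℕ))) :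
    (∀ t : Fin n, vhat v φ {e t} = φ (e t)) ∧
    (∀ S : Finset U, S ⊆ Finset.univ.image e → vhat v φ S = ∑ j ∈ S, φ j) := by
  have hadd : ∀ S ⊆ univ.image e, vhat v φ S = ∑ j ∈ S, φ j := fun S hS =>
    vhat_eq_sum_of_sum_le v φ hempty fun T hT =>
      sum_le_of_subset_image hempty hsub hinj hφ (hT.trans hS)
  refine ⟨fun t => ?_, hadd⟩
  rw [hadd {e t} (singleton_subset_iff.mpr (mem_image_of_mem e (mem_univ t))), sum_singleton]

theorem vhat_additive_on_P {U : Type*} [DecidableEq U] [Fintype U]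
    (v : Finset U → ℝ)
    (hnn : ∀ S, 0 ≤ v S) (hempty : v ∅ = 0)
    (hmono : ∀ S T : Finset U, S ⊆ T → v S ≤ v T)
    (hsub : ∀ S T : Finset U, v S + v T ≥ v (S ∩ T) + v (S ∪ T))
    {n : ℕ} (e : Fin n → U) (hinj : Function.Injective e)
    (φ : U → ℝ) (hφnn : ∀ j, 0 ≤ φ j)
    (hφ : ∀ t : Fin n, φ (e t) = v (prefixSet e ((t : ℕ) + 1)) - v (prefixSet e (t : ℕ))) :
    (∀ t : Fin n, vhat v φ {e t} = φ (e t)) ∧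
    (∀ S : Finset U, S ⊆ Finset.univ.image e → vhat v φ S = ∑ j ∈ S, φ j) :=
  vhat_additive_on_P_general v hempty hsub e hinj φ hφ
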